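/- arXiv:2402.06158 — 3 statements merged into one kernel-verified Lean document; each statement's English description precedes it below -/
import Mathlib

section
/- There exists an optimal solution to max_{X ⊆ U} ℓ(X) of threshold form: if ℓ* = max_{X⊆U} ℓ(X), then the set X* = {i ∈ U : r_i ≥ ℓ*} satisfies ℓ(X*) = ℓ*. -/
/-- There is an optimal subset of threshold form: the set of all products whose
revenue is at least the optimal value ℓ* attains ℓ*. -/
theorem mnl_threshold_optimal_subset {ι : Type*} [DecidableEq ι]
    (U : Finset ι) (r w : ι → ℝ) (w0 : ℝ)
    (hr : ∀ i ∈ U, 0 ≤ r i) (hw : ∀ i ∈ U, 0 < w i) (hw0 : 0 < w0)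
    (ℓ : Finset ι → ℝ)
    (hℓ : ∀ S : Finset ι, ℓ S = (∑ i ∈ S, r i * w i) / (w0 + ∑ i ∈ S, w i))
    (lstar : ℝ)
    (hub : ∀ X ⊆ U, ℓ X ≤ lstar)
    (hatt : ∃ X ⊆ U, ℓ X = lstar) :
    ℓ (U.filter fun i => lstar ≤ r i) = lstar := by
  classical
  obtain ⟨X, hXU, hXopt⟩ := hatt
  set L := lstar with hL
  set T := U.filter fun i => L ≤ r i with hTdef
  have hTU : T ⊆ U := Finset.filter_subset _ _
  have hDpos : ∀ S : Finset ι, S ⊆ U → 0 < w0 + ∑ i ∈ S, w i := by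
    intro S hS
    have : (0:ℝ) ≤ ∑ i ∈ S, w i :=
      Finset.sum_nonneg fun i hi => (hw i (hS hi)).le
    linarith
  -- rewrite sums: ∑ r*w = ∑ (r-L)*w + L*∑ w
  have hsplit : ∀ S : Finset ι,
      ∑ i ∈ S, r i * w i = (∑ i ∈ S, (r i - L) * w i) + L * ∑ i ∈ S, w i := by
    intro S
    rw [Finset.mul_sum, ← Finset.sum_add_distrib]
    exact Finset.sum_congr rfl fun i _ => by ring
  -- the optimal set X gives f(X) = L * w0
  have hfX : ∑ i ∈ X, (r i - L) * w i = L * w0 := by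
    have hD := hDpos X hXU
    have h1 : (∑ i ∈ X, r i * w i) = L * (w0 + ∑ i ∈ X, w i) := by
      have := hℓ X
      rw [hXopt] at this
      field_simp at this
      linarith [this]
    have := hsplit X
    nlinarith [h1, this]
  -- f(T) ≤ L * w0 from hub
  have hfT_le : ∑ i ∈ T, (r i - L) * w i ≤ L * w0 := by
    have hD := hDpos T hTU
    have h1 : (∑ i ∈ T, r i * w i) ≤ L * (w0 + ∑ i ∈ T, w i) := by
      have h2 := hub T hTU
      rw [hℓ T, div_le_iff₀ hD] at h2
      linarith
    have := hsplit T
    nlinarith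
  -- f(X) ≤ f(T)
  have hfX_le : ∑ i ∈ X, (r i - L) * w i ≤ ∑ i ∈ T, (r i - L) * w i := by
    have hunion : ∑ i ∈ X, (r i - L) * w i
        = (∑ i ∈ X ∩ T, (r i - L) * w i) + ∑ i ∈ X \ T, (r i - L) * w i := by
      rw [← Finset.sum_inter_add_sum_sdiff]
    have hneg : ∑ i ∈ X \ T, (r i - L) * w i ≤ 0 := by
      apply Finset.sum_nonpos
      intro i hi
      have hiU : i ∈ U := hXU (Finset.mem_sdiff.mp hi).1
      have hnT : i ∉ T := (Finset.mem_sdiff.mp hi).2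
      have hlt : r i < L := by
        by_contra h
        exact hnT (Finset.mem_filter.mpr ⟨hiU, le_of_not_gt h⟩)
      have := (hw i hiU).le
      nlinarith
    have hsub : ∑ i ∈ X ∩ T, (r i - L) * w i ≤ ∑ i ∈ T, (r i - L) * w i := by
      apply Finset.sum_le_sum_of_subset_of_nonneg (Finset.inter_subset_right)
      intro i hiT _
      have hiF := Finset.mem_filter.mp hiT
      have := (hw i hiF.1).le
      nlinarith [hiF.2]
    linarith
  have hfT : ∑ i ∈ T, (r i - L) * w i = L * w0 := le_antisymm hfT_le (hfX ▸ hfX_le)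
  have hD := hDpos T hTU
  rw [hℓ T, div_eq_iff (ne_of_gt hD), hsplit T, hfT]
  ring
end

section
/- The truncated best-subset MNL function g(U) = min{h(U), r_min} is submodular: for all finite sets X ⊆ Y and element e ∉ Y, g(X ∪ {e}) − g(X) ≥ g(Y ∪ {e}) − g(Y), where h(U) = max_{X⊆U} ℓ(X), ℓ is the MNL ratio function, and r_min = min over all products of r_i. -/
open Finset

section Aux

variable {ι : Type*} [DecidableEq ι]

private lemma aux_denom_pos (w : ι → ℝ) (w0 : ℝ) (hw : ∀ i, 0 < w i) (hw0 : 0 < w0)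
    (S : Finset ι) : 0 < w0 + ∑ i ∈ S, w i := by
  have h : (0:ℝ) ≤ ∑ i ∈ S, w i := Finset.sum_nonneg fun i _ => (hw i).le
  linarith

private lemma aux_step (r w : ι → ℝ) (w0 c : ℝ) (hw : ∀ i, 0 < w i) (hw0 : 0 < w0)
    (S : Finset ι) (a : ι) (ha : a ∉ S) (hra : c ≤ r a) :
    min ((∑ i ∈ S, r i * w i) / (w0 + ∑ i ∈ S, w i)) c ≤
      min ((∑ i ∈ insert a S, r i * w i) / (w0 + ∑ i ∈ insert a S, w i)) c := by
  rw [Finset.sum_insert ha, Finset.sum_insert ha]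
  have hD : 0 < w0 + ∑ i ∈ S, w i := aux_denom_pos w w0 hw hw0 S
  have hwa := hw a
  have hD' : 0 < w0 + (w a + ∑ i ∈ S, w i) := by linarith
  set R := ∑ i ∈ S, r i * w i with hR
  set W := ∑ i ∈ S, w i with hW
  set m := min (R / (w0 + W)) c with hm
  have hmc : m ≤ c := min_le_right _ _
  have hml : m ≤ R / (w0 + W) := min_le_left _ _
  have hmR : m * (w0 + W) ≤ R := (le_div_iff₀ hD).mp hml
  refine le_min ?_ hmc
  rw [le_div_iff₀ hD']
  nlinarith [mul_le_mul_of_nonneg_right hmc hwa.le, mul_le_mul_of_nonneg_right hra hwa.le]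

private lemma aux_mono_union (r w : ι → ℝ) (w0 c : ℝ) (hw : ∀ i, 0 < w i) (hw0 : 0 < w0)
    (hr : ∀ i, c ≤ r i) (S E : Finset ι) :
    min ((∑ i ∈ S, r i * w i) / (w0 + ∑ i ∈ S, w i)) c ≤
      min ((∑ i ∈ S ∪ E, r i * w i) / (w0 + ∑ i ∈ S ∪ E, w i)) c := by
  classical
  induction E using Finset.induction_on with
  | empty => simp
  | @insert a E ha ih =>
      by_cases haS : a ∈ S ∪ E
      · rw [Finset.union_insert, Finset.insert_eq_self.mpr haS]
        exact ih
      · rw [Finset.union_insert]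
        exact ih.trans (aux_step r w w0 c hw hw0 (S ∪ E) a haS (hr a))

private lemma aux_mono (r w : ι → ℝ) (w0 c : ℝ) (hw : ∀ i, 0 < w i) (hw0 : 0 < w0)
    (hr : ∀ i, c ≤ r i) (S T : Finset ι) (hST : S ⊆ T) :
    min ((∑ i ∈ S, r i * w i) / (w0 + ∑ i ∈ S, w i)) c ≤
      min ((∑ i ∈ T, r i * w i) / (w0 + ∑ i ∈ T, w i)) c := by
  have := aux_mono_union r w w0 c hw hw0 hr S T
  rwa [Finset.union_eq_right.mpr hST] at this

private lemma aux_marg (R W w0 rr ww : ℝ) (hD : 0 < w0 + W) (hww : 0 < ww) :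
    (rr * ww + R) / (w0 + (ww + W)) - R / (w0 + W)
      = ww * (rr - R / (w0 + W)) / (w0 + W + ww) := by
  have h1 : w0 + W ≠ 0 := hD.ne'
  have h2 : w0 + (ww + W) ≠ 0 := ne_of_gt (by linarith)
  have h3 : w0 + W + ww ≠ 0 := ne_of_gt (by linarith)
  field_simp
  ring

private lemma aux_key (p q p' q' c : ℝ)
    (hmon : min p c ≤ min q c)
    (hstep : min p c ≤ min p' c)
    (hI : q < c → p ≤ q → q' - q ≤ p' - p) :
    min p' c - min p c ≥ min q' c - min q c := by
  rcases le_or_gt c q with hcq | hqc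
  · have h1 : min q c = c := min_eq_right hcq
    have h2 : min q' c ≤ c := min_le_right _ _
    linarith
  · have hqq : min q c = q := min_eq_left hqc.le
    have hpq : p ≤ q := by
      rcases le_total p c with hpc | hpc
      · have := min_eq_left hpc; linarith
      · have := min_eq_right hpc; linarith
    have hpp : min p c = p := min_eq_left (hpq.trans hqc.le)
    have hII := hI hqc hpq
    have h3 : min q' c ≤ q' := min_le_left _ _
    have h4 : min q' c ≤ c := min_le_right _ _
    rcases min_choice p' c with h5 | h5 <;> linarith

end Aux

/-- The truncated best-subset MNL function g(U) = min{h(U), r_min} is submodular. -/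
theorem mnl_truncated_best_subset_submodular {ι : Type*} [DecidableEq ι] [Fintype ι]
    [Nonempty ι]
    (r w : ι → ℝ) (w0 : ℝ) (hr : ∀ i, 0 ≤ r i) (hw : ∀ i, 0 < w i) (hw0 : 0 < w0)
    (ℓ : Finset ι → ℝ)
    (hℓ : ∀ S : Finset ι, ℓ S = (∑ i ∈ S, r i * w i) / (w0 + ∑ i ∈ S, w i))
    (h : Finset ι → ℝ)
    (hh : ∀ U : Finset ι, h U = (U.powerset).sup' (Finset.powerset_nonempty U) ℓ)
    (rmin : ℝ) (hrmin : rmin = Finset.univ.inf' Finset.univ_nonempty r)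
    (g : Finset ι → ℝ) (hg : ∀ U : Finset ι, g U = min (h U) rmin)
    (X Y : Finset ι) (hXY : X ⊆ Y) (e : ι) (he : e ∉ Y) :
    g (insert e X) - g X ≥ g (insert e Y) - g Y := by
  classical
  have hrc : ∀ i, rmin ≤ r i := by
    intro i; rw [hrmin]; exact Finset.inf'_le _ (Finset.mem_univ i)
  -- g U = min (ℓ U) rmin, with ℓ U the full-set ratio
  have hgl : ∀ U : Finset ι,
      g U = min ((∑ i ∈ U, r i * w i) / (w0 + ∑ i ∈ U, w i)) rmin := by
    intro U
    rw [hg U]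
    have hU : (∑ i ∈ U, r i * w i) / (w0 + ∑ i ∈ U, w i) ≤ h U := by
      rw [hh U]
      have := Finset.le_sup' ℓ (Finset.mem_powerset_self U)
      rwa [hℓ U] at this
    refine le_antisymm ?_ (min_le_min hU le_rfl)
    by_cases hcase : (∑ i ∈ U, r i * w i) / (w0 + ∑ i ∈ U, w i) < rmin
    · have hsup : h U ≤ (∑ i ∈ U, r i * w i) / (w0 + ∑ i ∈ U, w i) := by
        rw [hh U]
        refine Finset.sup'_le _ _ ?_
        intro S hS
        rw [hℓ S]
        have hmono := aux_mono r w w0 rmin hw hw0 hrc S U (Finset.mem_powerset.mp hS)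
        rcases le_total ((∑ i ∈ S, r i * w i) / (w0 + ∑ i ∈ S, w i)) rmin with h' | h'
        · have := min_eq_left h'
          have h2 := min_le_left ((∑ i ∈ U, r i * w i) / (w0 + ∑ i ∈ U, w i)) rmin
          linarith
        · have := min_eq_right h'
          exfalso
          have h2 := min_le_left ((∑ i ∈ U, r i * w i) / (w0 + ∑ i ∈ U, w i)) rmin
          linarith
      exact le_min ((min_le_left _ _).trans hsup) (min_le_right _ _)
    · rw [min_eq_right (not_lt.mp hcase)]
      exact min_le_right _ _
  have heX : e ∉ X := fun hx => he (hXY hx)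
  rw [hgl, hgl, hgl, hgl]
  refine aux_key _ _ _ _ _ (aux_mono r w w0 rmin hw hw0 hrc X Y hXY)
    (aux_mono r w w0 rmin hw hw0 hrc X (insert e X) (Finset.subset_insert e X)) ?_
  intro hqc hpq
  have hDX : 0 < w0 + ∑ i ∈ X, w i := aux_denom_pos w w0 hw hw0 X
  have hDY : 0 < w0 + ∑ i ∈ Y, w i := aux_denom_pos w w0 hw hw0 Y
  have hwe := hw e
  have hWXY : (∑ i ∈ X, w i) ≤ ∑ i ∈ Y, w i :=
    Finset.sum_le_sum_of_subset_of_nonneg hXY fun i _ _ => (hw i).le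
  rw [Finset.sum_insert heX, Finset.sum_insert heX, Finset.sum_insert he,
    Finset.sum_insert he,
    aux_marg (∑ i ∈ X, r i * w i) (∑ i ∈ X, w i) w0 (r e) (w e) hDX hwe,
    aux_marg (∑ i ∈ Y, r i * w i) (∑ i ∈ Y, w i) w0 (r e) (w e) hDY hwe]
  have hre : rmin ≤ r e := hrc e
  refine div_le_div₀ (by nlinarith) (by nlinarith) (by linarith) (by linarith)
end

section
/- For the MNL ratio function ℓ, removing from X an element i with r_i < ℓ(X) yields ℓ(X \ {i}) > ℓ(X); hence any optimal subset X (maximizing ℓ over subsets of U) contains no element with revenue strictly below its own value ℓ(X). -/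
/-- Removing a low-revenue element strictly increases the MNL value; hence an
optimal subset contains no element with revenue strictly below its value. -/
theorem mnl_optimal_subset_no_low_revenue {ι : Type*} [DecidableEq ι]
    (U : Finset ι) (r w : ι → ℝ) (w0 : ℝ)
    (hr : ∀ i, 0 ≤ r i) (hw : ∀ i, 0 < w i) (hw0 : 0 < w0)
    (ℓ : Finset ι → ℝ)
    (hℓ : ∀ S : Finset ι, ℓ S = (∑ i ∈ S, r i * w i) / (w0 + ∑ i ∈ S, w i))
    (X : Finset ι) (hXU : X ⊆ U) :
    (∀ i ∈ X, r i < ℓ X → ℓ (X.erase i) > ℓ X) ∧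
      ((∀ Y ⊆ U, ℓ Y ≤ ℓ X) → ∀ i ∈ X, r i ≥ ℓ X) := by
  have key : ∀ i ∈ X, r i < ℓ X → ℓ (X.erase i) > ℓ X := by
    intro i hi hri
    have hA : ∑ j ∈ X, r j * w j = r i * w i + ∑ j ∈ X.erase i, r j * w j :=
      (Finset.add_sum_erase X _ hi).symm
    have hB : ∑ j ∈ X, w j = w i + ∑ j ∈ X.erase i, w j :=
      (Finset.add_sum_erase X _ hi).symm
    set A' := ∑ j ∈ X.erase i, r j * w j with hA'
    set W' := ∑ j ∈ X.erase i, w j with hW'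
    have hW'0 : 0 ≤ W' := Finset.sum_nonneg fun j _ => (hw j).le
    have hB' : 0 < w0 + W' := by linarith
    have hBpos : 0 < w0 + ∑ j ∈ X, w j := by
      have := (hw i).le; rw [hB]; linarith
    rw [hℓ X] at hri
    rw [hℓ X, hℓ (X.erase i)]
    rw [lt_div_iff₀ hBpos] at hri
    rw [gt_iff_lt, div_lt_div_iff₀ hBpos hB']
    rw [hA, hB] at hri ⊢
    nlinarith [hw i]
  refine ⟨key, fun hopt i hi => ?_⟩
  by_contra h
  push_neg at h
  have h1 := key i hi h
  have h2 := hopt (X.erase i) ((Finset.erase_subset _ _).trans hXU)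
  linarith
end
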